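/- arXiv:2512.16759 — 2 statements merged into one kernel-verified Lean document; each statement's English description precedes it below -/
import Mathlib

section
/- Let X ~ Pareto(m, α) with density α m^α / x^{α+1} on [m, ∞), and nα₁ > 1. If X ~ P_{W_u, nα₁} is the Bayes marginal of Pareto(m, nα₁) with m ~ Gamma(u, u), then E[X] = nα₁/(nα₁ − 1) (independent of u), and D_KL(P_{W_u, nα₁} ∥ P_{W_u, nα₀}) ≤ log(nα₁(nα₀+u)/(nα₀(nα₁+u))) + u·nα₁/(nα₁−1); consequently D_KL(P_{W_u, nα₁} ∥ P_{W_u, nα₀}) → 0 as u ↓ 0. -/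
open MeasureTheory ENNReal Filter Set
open scoped Classical
noncomputable section

/-- The positive part of an extended real, as an extended nonnegative real. -/
def erealPos (a : EReal) : ℝ≥0∞ := if a = ⊤ then ⊤ else ENNReal.ofReal a.toReal

/-- Generalized expectation `E[f] = E[f⁺] - E[f⁻]`, valued in the extended reals. -/
def eexp {Ω : Type*} {mΩ : MeasurableSpace Ω} (μ : Measure Ω) (f : Ω → EReal) : EReal :=
  ((∫⁻ ω, erealPos (f ω) ∂μ : ℝ≥0∞) : EReal) - ((∫⁻ ω, erealPos (-(f ω)) ∂μ : ℝ≥0∞) : EReal)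

/-- Logarithm on `[0,∞]`, with `log 0 = -∞` and `log ∞ = ∞`. -/
def elog (x : ℝ≥0∞) : EReal := if x = 0 then ⊥ else if x = ⊤ then ⊤ else ((Real.log x.toReal : ℝ) : EReal)

/-- Kullback–Leibler divergence, valued in `[0,∞]` (as an extended real). -/
def klDiv' {Ω : Type*} {mΩ : MeasurableSpace Ω} (μ ν : Measure Ω) : EReal :=
  if μ ≪ ν then eexp μ (fun ω => elog (μ.rnDeriv ν ω)) else ⊤

/-- The Bayes marginal of the Pareto(m, α) model with prior `Gamma(u, u)` on the scale `m`:
the measure on `ℝ` with Lebesgue density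
`f_{W_u, α}(x) = ∫₀ˣ (α m^α / x^(α+1)) · gammaPDF(u, u)(m) dm`. -/
def paretoBayes (α u : ℝ) : Measure ℝ :=
  volume.withDensity fun x => ENNReal.ofReal
    (∫ m in Set.Ioc (0 : ℝ) x,
      (α * m ^ α / x ^ (α + 1)) * ProbabilityTheory.gammaPDFReal u u m)

/-! The marginal density is `f_a(x) = ∫₀ˣ a mᵃ x⁻⁽ᵃ⁺¹⁾ w(m) dm`. By Tonelli, `∫ xᵖ f_a(x) dx`
is the `p`-th Pareto moment `a mᵖ / (a - p)` averaged over the prior; with `p = 0, 1` and the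
Gamma(u, u) prior (mass 1, mean 1) this gives a probability measure with mean `a / (a - 1)`.
For the Gamma prior, `e^{-um} ∈ [e^{-ux}, 1]` on `(0, x]` squeezes `f_a(x)` between `e^{-ux}` and
`1` times `a / (a + u) · uᵘ x^{u-1} / Γ(u)`, so `|log (f_a / f_b) - log (a (b + u) / (b (a + u)))|`
is at most `u x`. Integrating against `P_a` puts the divergence within `u · a / (a - 1)` of a
logarithm that vanishes at `u = 0`. -/

open ProbabilityTheory Real

/-- The Lebesgue density of the Bayes marginal of Pareto(m, a) under a prior density `w` on the
scale `m`. -/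
def paretoMixtureDensity (w : ℝ → ℝ) (a x : ℝ) : ℝ :=
  ∫ m in Ioc (0 : ℝ) x, (a * m ^ a / x ^ (a + 1)) * w m

def paretoMixture (w : ℝ → ℝ) (a : ℝ) : Measure ℝ :=
  volume.withDensity fun x => ENNReal.ofReal (paretoMixtureDensity w a x)

lemma paretoBayes_eq_paretoMixture (a u : ℝ) :
    paretoBayes a u = paretoMixture (gammaPDFReal u u) a := rfl

lemma lintegral_Ioi_rpow_of_lt {r c : ℝ} (hr : r < -1) (hc : 0 < c) :
    ∫⁻ x in Ioi c, ENNReal.ofReal (x ^ r) = ENNReal.ofReal (-c ^ (r + 1) / (r + 1)) := by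
  rw [← ofReal_integral_eq_lintegral_ofReal (integrableOn_Ioi_rpow_of_lt hr hc),
    integral_Ioi_rpow_of_lt hr hc]
  filter_upwards [ae_restrict_mem measurableSet_Ioi] with x hx
  exact rpow_nonneg (hc.trans hx).le _

lemma lintegral_Ioi_rpow_mul_paretoPDF {a p m : ℝ} (ha : 0 ≤ a) (hpa : p < a) (hm : 0 < m) :
    ∫⁻ x in Ioi m, ENNReal.ofReal (x ^ p * (a * m ^ a / x ^ (a + 1)))
      = ENNReal.ofReal (a / (a - p) * m ^ p) := by
  have hpow : ∀ x ∈ Ioi m, ENNReal.ofReal (x ^ p * (a * m ^ a / x ^ (a + 1)))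
      = ENNReal.ofReal (a * m ^ a) * ENNReal.ofReal (x ^ (p - a - 1)) := by
    intro x hx
    have hx0 : 0 < x := hm.trans hx
    rw [← ENNReal.ofReal_mul (by positivity), sub_sub, rpow_sub hx0]
    congr 1
    ring
  rw [setLIntegral_congr_fun measurableSet_Ioi hpow, lintegral_const_mul' _ _ ENNReal.ofReal_ne_top,
    lintegral_Ioi_rpow_of_lt (by linarith) hm, ← ENNReal.ofReal_mul (by positivity)]
  congr 1
  rw [show p - a - 1 + 1 = p - a by ring, rpow_sub hm, neg_div, ← div_neg, neg_sub]
  field_simp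

/-- The support of the joint density of an observation `x` and its Pareto scale `m`. -/
def paretoSupport : Set (ℝ × ℝ) := {q | 0 < q.2 ∧ q.2 ≤ q.1}

lemma measurableSet_paretoSupport : MeasurableSet paretoSupport :=
  (measurableSet_lt measurable_const measurable_snd).inter
    (measurableSet_le measurable_snd measurable_fst)

lemma lintegral_indicator_paretoSupport_left (G : ℝ × ℝ → ℝ≥0∞) (x : ℝ) :
    ∫⁻ m, paretoSupport.indicator G (x, m) = ∫⁻ m in Ioc 0 x, G (x, m) := by
  rw [← lintegral_indicator measurableSet_Ioc]
  rfl

lemma lintegral_indicator_paretoSupport_right (G : ℝ × ℝ → ℝ≥0∞) {m : ℝ} (hm : 0 < m) :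
    ∫⁻ x, paretoSupport.indicator G (x, m) = ∫⁻ x in Ici m, G (x, m) := by
  rw [← lintegral_indicator measurableSet_Ici]
  congr with x
  simp only [paretoSupport, indicator_apply, mem_Ici, mem_ofPred_eq, hm, true_and]

section Mixture

variable {w : ℝ → ℝ} {a x : ℝ}

lemma paretoMixtureDensity_of_nonpos (hx : x ≤ 0) : paretoMixtureDensity w a x = 0 := by
  rw [paretoMixtureDensity, Ioc_eq_empty (not_lt.2 hx), Measure.restrict_empty,
    integral_zero_measure]

lemma measurable_paretoMixtureDensity (hw : Measurable w) (a : ℝ) :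
    Measurable (paretoMixtureDensity w a) := by
  have hkernel : Measurable fun q : ℝ × ℝ => (a * q.2 ^ a / q.1 ^ (a + 1)) * w q.2 := by
    fun_prop
  have : paretoMixtureDensity w a = fun x => ∫ m,
      paretoSupport.indicator (fun q => (a * q.2 ^ a / q.1 ^ (a + 1)) * w q.2) (x, m) := by
    ext x
    rw [paretoMixtureDensity, ← integral_indicator measurableSet_Ioc]
    rfl
  rw [this]
  exact (hkernel.indicator measurableSet_paretoSupport).stronglyMeasurable.integral_prod_right'
    |>.measurable

lemma integrableOn_paretoKernel_mul (ha : 0 ≤ a) (hw0 : ∀ m, 0 ≤ w m) (hwi : Integrable w)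
    (hx : 0 < x) : IntegrableOn (fun m => a * m ^ a / x ^ (a + 1) * w m) (Ioc 0 x) := by
  refine Integrable.mono' (hwi.integrableOn.const_mul (a * x ^ a / x ^ (a + 1))) ?_ ?_
  · exact ((by fun_prop : Measurable fun m : ℝ => a * m ^ a / x ^ (a + 1)).aestronglyMeasurable.mul
      hwi.1).restrict
  · filter_upwards [ae_restrict_mem measurableSet_Ioc] with m hm
    rw [Real.norm_of_nonneg (by have := hw0 m; have := hm.1; positivity)]
    gcongr
    exacts [hw0 m, hm.1.le, hm.2]

lemma ofReal_paretoMixtureDensity (ha : 0 ≤ a) (hw0 : ∀ m, 0 ≤ w m) (hwi : Integrable w)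
    (hx : 0 < x) : ENNReal.ofReal (paretoMixtureDensity w a x)
      = ∫⁻ m in Ioc 0 x, ENNReal.ofReal (a * m ^ a / x ^ (a + 1) * w m) := by
  refine ofReal_integral_eq_lintegral_ofReal (integrableOn_paretoKernel_mul ha hw0 hwi hx) ?_
  filter_upwards [ae_restrict_mem measurableSet_Ioc] with m hm
  have := hw0 m
  have := hm.1
  positivity

end Mixture

lemma lintegral_rpow_paretoMixture {w : ℝ → ℝ} {a p : ℝ} (hw : Measurable w)
    (hw0 : ∀ m, 0 ≤ w m) (hwi : Integrable w) (ha : 0 ≤ a) (hpa : p < a) :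
    ∫⁻ x, ENNReal.ofReal (x ^ p) ∂paretoMixture w a
      = ENNReal.ofReal (a / (a - p)) * ∫⁻ m in Ioi 0, ENNReal.ofReal (m ^ p * w m) := by
  set G : ℝ × ℝ → ℝ≥0∞ := fun q => ENNReal.ofReal (q.1 ^ p * (a * q.2 ^ a / q.1 ^ (a + 1) * w q.2))
  have hx : ∀ x, ENNReal.ofReal (paretoMixtureDensity w a x) * ENNReal.ofReal (x ^ p)
      = ∫⁻ m, paretoSupport.indicator G (x, m) := by
    intro x
    rw [lintegral_indicator_paretoSupport_left]
    rcases le_or_gt x 0 with hx | hx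
    · simp [paretoMixtureDensity_of_nonpos hx, Ioc_eq_empty (not_lt.2 hx)]
    · rw [ofReal_paretoMixtureDensity ha hw0 hwi hx,
        ← lintegral_mul_const' _ _ ENNReal.ofReal_ne_top]
      refine setLIntegral_congr_fun measurableSet_Ioc fun m hm => ?_
      rw [← ENNReal.ofReal_mul (by have := hw0 m; have := hm.1; positivity), mul_comm]
  have hm : ∀ m, ∫⁻ x, paretoSupport.indicator G (x, m)
      = (Ioi 0).indicator
          (fun m => ENNReal.ofReal (a / (a - p)) * ENNReal.ofReal (m ^ p * w m)) m := by
    intro m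
    rcases le_or_gt m 0 with hm | hm
    · have : ∀ x, paretoSupport.indicator G (x, m) = 0 := fun x =>
        indicator_of_notMem (s := paretoSupport) (fun hm' : 0 < m ∧ m ≤ x => by linarith [hm'.1]) _
      simp [this, hm]
    · have hsplit : ∀ x ∈ Ioi m, G (x, m)
          = ENNReal.ofReal (x ^ p * (a * m ^ a / x ^ (a + 1))) * ENNReal.ofReal (w m) := by
        intro x hx
        rw [← ENNReal.ofReal_mul (by have := hm.trans hx; positivity), mul_assoc]
      rw [lintegral_indicator_paretoSupport_right G hm,
        Measure.restrict_congr_set Ioi_ae_eq_Ici.symm,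
        setLIntegral_congr_fun measurableSet_Ioi hsplit,
        lintegral_mul_const' _ _ ENNReal.ofReal_ne_top, lintegral_Ioi_rpow_mul_paretoPDF ha hpa hm,
        indicator_of_mem (mem_Ioi.2 hm),
        ← ENNReal.ofReal_mul (by positivity), ← ENNReal.ofReal_mul (by positivity), mul_assoc]
  have hG : Measurable (paretoSupport.indicator G) :=
    Measurable.indicator (by fun_prop) measurableSet_paretoSupport
  rw [paretoMixture, lintegral_withDensity_eq_lintegral_mul _
    (measurable_paretoMixtureDensity hw a).ennreal_ofReal (by fun_prop)]
  calc ∫⁻ x, ENNReal.ofReal (paretoMixtureDensity w a x) * ENNReal.ofReal (x ^ p)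
      = ∫⁻ x, ∫⁻ m, paretoSupport.indicator G (x, m) := lintegral_congr hx
    _ = ∫⁻ m, ∫⁻ x, paretoSupport.indicator G (x, m) := lintegral_lintegral_swap hG.aemeasurable
    _ = _ := by
      simp_rw [hm]
      rw [lintegral_indicator measurableSet_Ioi, lintegral_const_mul' _ _ ENNReal.ofReal_ne_top]

section GammaPrior

variable {a r : ℝ}

lemma integrable_gammaPDFReal (ha : 0 < a) (hr : 0 < r) : Integrable (gammaPDFReal a r) := by
  refine ⟨(measurable_gammaPDFReal a r).aestronglyMeasurable, ?_⟩
  rw [hasFiniteIntegral_iff_ofReal (ae_of_all _ (gammaPDFReal_nonneg ha hr))]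
  exact (lintegral_gammaPDF_eq_one ha hr).trans_lt ENNReal.one_lt_top

lemma setLIntegral_Ioi_gammaPDF (ha : 0 < a) (hr : 0 < r) :
    ∫⁻ x in Ioi 0, ENNReal.ofReal (gammaPDFReal a r x) = 1 := by
  have h := lintegral_add_compl (μ := volume) (gammaPDF a r) (measurableSet_Ioi (a := 0))
  rwa [compl_Ioi, Measure.restrict_congr_set Iio_ae_eq_Iic.symm,
    lintegral_gammaPDF_of_nonpos le_rfl, add_zero, lintegral_gammaPDF_eq_one ha hr] at h

lemma mul_gammaPDFReal (ha : 0 < a) (hr : 0 < r) {x : ℝ} (hx : 0 < x) :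
    x * gammaPDFReal a r x = a / r * gammaPDFReal (a + 1) r x := by
  simp only [gammaPDFReal, if_pos hx.le, add_sub_cancel_right, Gamma_add_one ha.ne',
    rpow_add_one hr.ne']
  rw [rpow_sub_one hx.ne']
  field_simp

lemma setLIntegral_Ioi_mul_gammaPDF (ha : 0 < a) (hr : 0 < r) :
    ∫⁻ x in Ioi 0, ENNReal.ofReal (x * gammaPDFReal a r x) = ENNReal.ofReal (a / r) := by
  rw [setLIntegral_congr_fun measurableSet_Ioi fun x hx => by rw [mul_gammaPDFReal ha hr hx],
    ← mul_one (ENNReal.ofReal (a / r)), ← setLIntegral_Ioi_gammaPDF (by linarith : 0 < a + 1) hr,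
    ← lintegral_const_mul' _ _ ENNReal.ofReal_ne_top]
  congr with x
  rw [ENNReal.ofReal_mul (by positivity)]

end GammaPrior

lemma ae_pos_of_withDensity_ofReal {Ω : Type*} [MeasurableSpace Ω] {ρ : Measure Ω} {f : Ω → ℝ}
    (hf : Measurable f) : ∀ᵐ ω ∂ρ.withDensity (fun ω => ENNReal.ofReal (f ω)), 0 < f ω :=
  (ae_withDensity_iff hf.ennreal_ofReal).2 <| ae_of_all _ fun _ h =>
    ENNReal.ofReal_pos.1 (pos_iff_ne_zero.2 h)

lemma ae_pos_paretoMixture {w : ℝ → ℝ} (hw : Measurable w) (a : ℝ) :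
    ∀ᵐ x ∂paretoMixture w a, 0 < x :=
  (ae_pos_of_withDensity_ofReal (measurable_paretoMixtureDensity hw a)).mono fun _ hF =>
    not_le.1 fun hx => hF.ne' (paretoMixtureDensity_of_nonpos hx)

section ParetoBayes

variable {a u : ℝ}

lemma ae_pos_paretoBayes (a u : ℝ) : ∀ᵐ x ∂paretoBayes a u, 0 < x :=
  ae_pos_paretoMixture (measurable_gammaPDFReal u u) a

lemma isProbabilityMeasure_paretoBayes (ha : 0 < a) (hu : 0 < u) :
    IsProbabilityMeasure (paretoBayes a u) := by
  have h := lintegral_rpow_paretoMixture (p := 0) (measurable_gammaPDFReal u u)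
    (gammaPDFReal_nonneg hu hu) (integrable_gammaPDFReal hu hu) ha.le ha
  simp only [Real.rpow_zero, ENNReal.ofReal_one, one_mul, sub_zero, div_self ha.ne',
    setLIntegral_Ioi_gammaPDF hu hu, lintegral_one] at h
  exact ⟨h⟩

lemma lintegral_ofReal_paretoBayes (ha : 1 < a) (hu : 0 < u) :
    ∫⁻ x, ENNReal.ofReal x ∂paretoBayes a u = ENNReal.ofReal (a / (a - 1)) := by
  have h := lintegral_rpow_paretoMixture (p := 1) (measurable_gammaPDFReal u u)
    (gammaPDFReal_nonneg hu hu) (integrable_gammaPDFReal hu hu) (by linarith) ha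
  simp only [Real.rpow_one, setLIntegral_Ioi_mul_gammaPDF hu hu, div_self hu.ne',
    ENNReal.ofReal_one, mul_one] at h
  exact h

lemma integrable_id_paretoBayes (ha : 1 < a) (hu : 0 < u) :
    Integrable (fun x => x) (paretoBayes a u) := by
  refine ⟨aestronglyMeasurable_id, (hasFiniteIntegral_iff_ofReal ?_).2 ?_⟩
  · exact (ae_pos_paretoBayes a u).mono fun _ hx => hx.le
  · rw [lintegral_ofReal_paretoBayes ha hu]
    exact ENNReal.ofReal_lt_top

lemma integral_id_paretoBayes (ha : 1 < a) (hu : 0 < u) :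
    ∫ x, x ∂paretoBayes a u = a / (a - 1) := by
  rw [integral_eq_lintegral_of_nonneg_ae
    ((ae_pos_paretoBayes a u).mono fun _ hx => hx.le)
    aestronglyMeasurable_id, lintegral_ofReal_paretoBayes ha hu,
    ENNReal.toReal_ofReal (div_nonneg (by linarith) (by linarith))]

end ParetoBayes

section Envelope

variable {a b s r x : ℝ}

lemma integral_Ioc_paretoKernel_mul_rpow {t : ℝ} (hx : 0 < x) (h : -1 < a + t) :
    ∫ m in Ioc 0 x, a * m ^ a / x ^ (a + 1) * m ^ t = a / (a + t + 1) * x ^ t := by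
  have hpow : ∀ m ∈ Ioc 0 x, a * m ^ a / x ^ (a + 1) * m ^ t = a / x ^ (a + 1) * m ^ (a + t) :=
    fun m hm => by rw [rpow_add hm.1]; ring
  rw [setIntegral_congr_fun measurableSet_Ioc hpow, integral_const_mul,
    ← intervalIntegral.integral_of_le hx.le, integral_rpow (Or.inl h),
    zero_rpow (by linarith), sub_zero, rpow_add hx, rpow_add hx, rpow_add hx, Real.rpow_one]
  have := rpow_pos_of_pos hx a
  field_simp

lemma integrableOn_Ioc_paretoKernel_mul_rpow {t : ℝ} (h : -1 < a + t) :
    IntegrableOn (fun m => a * m ^ a / x ^ (a + 1) * m ^ t) (Ioc 0 x) := by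
  refine ((intervalIntegral.intervalIntegrable_rpow' h).1.const_mul (a / x ^ (a + 1))).congr ?_
  filter_upwards [ae_restrict_mem measurableSet_Ioc] with m hm
  rw [rpow_add hm.1]
  ring

lemma gammaPDFReal_mem_Icc (hs : 0 < s) (hr : 0 ≤ r) {m : ℝ} (hm : 0 < m) (hmx : m ≤ x) :
    gammaPDFReal s r m ∈ Icc (exp (-(r * x)) * (r ^ s / Gamma s * m ^ (s - 1)))
      (r ^ s / Gamma s * m ^ (s - 1)) := by
  rw [gammaPDFReal, if_pos hm.le]
  have hc : 0 ≤ r ^ s / Gamma s * m ^ (s - 1) := by positivity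
  constructor
  · rw [mul_comm]
    gcongr
  · exact mul_le_of_le_one_right hc (exp_le_one_iff.2 (neg_nonpos.2 (by positivity)))

lemma paretoMixtureDensity_gamma_mem_Icc (ha : 0 ≤ a) (hs : 0 < s) (hr : 0 < r) (hx : 0 < x) :
    paretoMixtureDensity (gammaPDFReal s r) a x ∈
      Icc (exp (-(r * x)) * (a / (a + s) * (r ^ s / Gamma s * x ^ (s - 1))))
        (a / (a + s) * (r ^ s / Gamma s * x ^ (s - 1))) := by
  set c := r ^ s / Gamma s
  have hpow : -1 < a + (s - 1) := by linarith
  have hI : ∫ m in Ioc 0 x, a * m ^ a / x ^ (a + 1) * (c * m ^ (s - 1))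
      = a / (a + s) * (c * x ^ (s - 1)) := by
    simp_rw [mul_left_comm _ c, integral_const_mul, integral_Ioc_paretoKernel_mul_rpow hx hpow]
    ring_nf
  have hIint : IntegrableOn (fun m => a * m ^ a / x ^ (a + 1) * (c * m ^ (s - 1))) (Ioc 0 x) := by
    simp_rw [mul_left_comm _ c]
    exact (integrableOn_Ioc_paretoKernel_mul_rpow hpow).const_mul c
  have hFint := integrableOn_paretoKernel_mul ha (gammaPDFReal_nonneg hs hr)
    (integrable_gammaPDFReal hs hr) hx
  constructor
  · rw [← hI, ← integral_const_mul]
    refine setIntegral_mono_on (hIint.const_mul _) hFint measurableSet_Ioc fun m hm => ?_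
    rw [mul_left_comm]
    exact mul_le_mul_of_nonneg_left (gammaPDFReal_mem_Icc hs hr.le hm.1 hm.2).1
      (by have := hm.1; positivity)
  · rw [← hI]
    refine setIntegral_mono_on hFint hIint measurableSet_Ioc fun m hm => ?_
    exact mul_le_mul_of_nonneg_left (gammaPDFReal_mem_Icc hs hr.le hm.1 hm.2).2
      (by have := hm.1; positivity)

lemma paretoMixtureDensity_gamma_pos (ha : 0 < a) (hs : 0 < s) (hr : 0 < r) (hx : 0 < x) :
    0 < paretoMixtureDensity (gammaPDFReal s r) a x :=
  lt_of_lt_of_le (by positivity) (paretoMixtureDensity_gamma_mem_Icc ha.le hs hr hx).1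

lemma log_paretoMixtureDensity_gamma_mem_Icc (ha : 0 < a) (hs : 0 < s) (hr : 0 < r) (hx : 0 < x) :
    log (paretoMixtureDensity (gammaPDFReal s r) a x) ∈
      Icc (log (a / (a + s) * (r ^ s / Gamma s * x ^ (s - 1))) - r * x)
        (log (a / (a + s) * (r ^ s / Gamma s * x ^ (s - 1)))) := by
  obtain ⟨hlow, hup⟩ := paretoMixtureDensity_gamma_mem_Icc ha.le hs hr hx
  have hE : 0 < a / (a + s) * (r ^ s / Gamma s * x ^ (s - 1)) := by positivity
  refine ⟨?_, log_le_log (paretoMixtureDensity_gamma_pos ha hs hr hx) hup⟩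
  have := log_le_log (by positivity) hlow
  rw [log_mul (exp_ne_zero _) hE.ne', log_exp] at this
  linarith

lemma abs_log_div_paretoMixtureDensity_gamma_sub_le (ha : 0 < a) (hb : 0 < b) (hs : 0 < s)
    (hr : 0 < r) (hx : 0 < x) :
    |log (paretoMixtureDensity (gammaPDFReal s r) a x / paretoMixtureDensity (gammaPDFReal s r) b x)
        - log (a * (b + s) / (b * (a + s)))| ≤ r * x := by
  have hc : 0 < r ^ s / Gamma s * x ^ (s - 1) := by positivity
  have hK : log (a * (b + s) / (b * (a + s)))
      = log (a / (a + s) * (r ^ s / Gamma s * x ^ (s - 1)))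
        - log (b / (b + s) * (r ^ s / Gamma s * x ^ (s - 1))) := by
    rw [← log_div (by positivity) (by positivity)]
    congr 1
    field_simp
  obtain ⟨ha₁, ha₂⟩ := log_paretoMixtureDensity_gamma_mem_Icc ha hs hr hx
  obtain ⟨hb₁, hb₂⟩ := log_paretoMixtureDensity_gamma_mem_Icc hb hs hr hx
  rw [log_div (paretoMixtureDensity_gamma_pos ha hs hr hx).ne'
    (paretoMixtureDensity_gamma_pos hb hs hr hx).ne', hK]
  exact abs_sub_le_iff.2 ⟨by linarith, by linarith⟩

end Envelope

section KL

variable {Ω : Type*} [MeasurableSpace Ω]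

lemma eexp_congr_ae {μ : Measure Ω} {f g : Ω → EReal} (h : f =ᵐ[μ] g) : eexp μ f = eexp μ g := by
  unfold eexp
  rw [lintegral_congr_ae (h.mono fun ω hω => congrArg erealPos hω),
    lintegral_congr_ae (h.mono fun ω hω => congrArg (fun y => erealPos (-y)) hω)]

lemma eexp_coe_eq_integral {μ : Measure Ω} {f : Ω → ℝ} (hf : Integrable f μ) :
    eexp μ (fun ω => (f ω : EReal)) = ((∫ ω, f ω ∂μ : ℝ) : EReal) := by
  have hpos : ∀ y : ℝ, erealPos y = ENNReal.ofReal y := fun y => if_neg (EReal.coe_ne_top y)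
  simp only [eexp, ← EReal.coe_neg, hpos]
  rw [integral_eq_lintegral_pos_part_sub_lintegral_neg_part hf, EReal.coe_sub,
    EReal.coe_ennreal_toReal ((lintegral_ofReal_le_lintegral_enorm f).trans_lt hf.2).ne,
    EReal.coe_ennreal_toReal
      ((lintegral_ofReal_le_lintegral_enorm fun ω => -f ω).trans_lt hf.neg.2).ne]

lemma klDiv'_withDensity_ofReal {ρ : Measure Ω} [SigmaFinite ρ] {f g : Ω → ℝ}
    (hf : Measurable f) (hg : Measurable g) (hfg : ∀ ω, g ω ≤ 0 → f ω = 0)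
    (hint : Integrable (fun ω => log (f ω / g ω)) (ρ.withDensity fun ω => ENNReal.ofReal (f ω))) :
    klDiv' (ρ.withDensity fun ω => ENNReal.ofReal (f ω))
        (ρ.withDensity fun ω => ENNReal.ofReal (g ω))
      = ((∫ ω, log (f ω / g ω) ∂(ρ.withDensity fun ω => ENNReal.ofReal (f ω)) : ℝ) : EReal) := by
  set μ := ρ.withDensity fun ω => ENNReal.ofReal (f ω)
  set ν := ρ.withDensity fun ω => ENNReal.ofReal (g ω)
  have hratio : Measurable fun ω => ENNReal.ofReal (f ω / g ω) := by fun_prop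
  have hμν : μ = ν.withDensity fun ω => ENNReal.ofReal (f ω / g ω) := by
    rw [← withDensity_mul _ hg.ennreal_ofReal hratio]
    refine congrArg ρ.withDensity (funext fun ω => ?_)
    rcases le_or_gt (g ω) 0 with hω | hω
    · simp [hfg ω hω, ENNReal.ofReal_of_nonpos hω]
    · rw [Pi.mul_apply, ← ENNReal.ofReal_mul hω.le, mul_div_cancel₀ _ hω.ne']
  have hac : μ ≪ ν := hμν ▸ withDensity_absolutelyContinuous _ _
  have hrn : μ.rnDeriv ν =ᵐ[μ] fun ω => ENNReal.ofReal (f ω / g ω) :=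
    hac.ae_eq (hμν ▸ Measure.rnDeriv_withDensity ν hratio)
  have hlog : (fun ω => elog (μ.rnDeriv ν ω)) =ᵐ[μ] fun ω => ((log (f ω / g ω) : ℝ) : EReal) := by
    filter_upwards [hrn, ae_pos_of_withDensity_ofReal hf] with ω hω hfω
    have hgω : 0 < g ω := not_le.1 fun h => hfω.ne' (hfg ω h)
    have hr : 0 < f ω / g ω := div_pos hfω hgω
    rw [hω, elog, if_neg (ENNReal.ofReal_pos.2 hr).ne', if_neg ENNReal.ofReal_ne_top,
      ENNReal.toReal_ofReal hr.le]
  rw [klDiv', if_pos hac, eexp_congr_ae hlog, eexp_coe_eq_integral hint]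

end KL

section ParetoBayesKL

variable {a b u : ℝ}

local notation "f[" c ", " v "]" => paretoMixtureDensity (gammaPDFReal v v) c

lemma integrable_log_div_paretoBayesDensity (ha : 1 < a) (hb : 0 < b) (hu : 0 < u) :
    Integrable (fun x => log (f[a, u] x / f[b, u] x)) (paretoBayes a u) := by
  have ha0 : 0 < a := by linarith
  have := isProbabilityMeasure_paretoBayes ha0 hu
  refine Integrable.mono' ((integrable_const |log (a * (b + u) / (b * (a + u)))|).add
    ((integrable_id_paretoBayes ha hu).const_mul u)) ?_ ?_
  · exact ((measurable_paretoMixtureDensity (measurable_gammaPDFReal u u) a).div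
      (measurable_paretoMixtureDensity (measurable_gammaPDFReal u u) b)).log.aestronglyMeasurable
  · filter_upwards [ae_pos_paretoBayes a u] with x hx
    have := abs_log_div_paretoMixtureDensity_gamma_sub_le ha0 hb hu hu hx
    have := abs_sub_abs_le_abs_sub (log (f[a, u] x / f[b, u] x)) (log (a * (b + u) / (b * (a + u))))
    rw [Real.norm_eq_abs, Pi.add_apply]
    linarith

lemma abs_integral_log_div_paretoBayesDensity_sub_le (ha : 1 < a) (hb : 0 < b) (hu : 0 < u) :
    |∫ x, log (f[a, u] x / f[b, u] x) ∂paretoBayes a u - log (a * (b + u) / (b * (a + u)))|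
      ≤ u * (a / (a - 1)) := by
  have ha0 : 0 < a := by linarith
  have := isProbabilityMeasure_paretoBayes ha0 hu
  rw [← integral_id_paretoBayes ha hu, ← integral_const_mul]
  calc |∫ x, log (f[a, u] x / f[b, u] x) ∂paretoBayes a u - log (a * (b + u) / (b * (a + u)))|
      = ‖∫ x, (log (f[a, u] x / f[b, u] x) - log (a * (b + u) / (b * (a + u))))
          ∂paretoBayes a u‖ := by
        rw [integral_sub (integrable_log_div_paretoBayesDensity ha hb hu) (integrable_const _),
          integral_const, probReal_univ, one_smul, Real.norm_eq_abs]
    _ ≤ ∫ x, u * x ∂paretoBayes a u := by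
        refine norm_integral_le_of_norm_le ((integrable_id_paretoBayes ha hu).const_mul u) ?_
        filter_upwards [ae_pos_paretoBayes a u] with x hx
        exact abs_log_div_paretoMixtureDensity_gamma_sub_le ha0 hb hu hu hx

lemma klDiv'_paretoBayes (ha : 1 < a) (hb : 0 < b) (hu : 0 < u) :
    klDiv' (paretoBayes a u) (paretoBayes b u)
      = ((∫ x, log (f[a, u] x / f[b, u] x) ∂paretoBayes a u : ℝ) : EReal) := by
  refine klDiv'_withDensity_ofReal (measurable_paretoMixtureDensity (measurable_gammaPDFReal u u) a)
    (measurable_paretoMixtureDensity (measurable_gammaPDFReal u u) b) (fun x hx => ?_)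
    (integrable_log_div_paretoBayesDensity ha hb hu)
  refine paretoMixtureDensity_of_nonpos (not_lt.1 fun hx0 => ?_)
  exact hx.not_gt (paretoMixtureDensity_gamma_pos hb hu hu hx0)

open Topology in
lemma tendsto_klDiv'_paretoBayes (ha : 1 < a) (hb : 0 < b) :
    Tendsto (fun u => klDiv' (paretoBayes a u) (paretoBayes b u)) (𝓝[>] 0) (𝓝 0) := by
  set I := fun u => ∫ x, log (f[a, u] x / f[b, u] x) ∂paretoBayes a u
  have hbound : Tendsto (fun u : ℝ => |Real.log (a * (b + u) / (b * (a + u)))| + u * (a / (a - 1)))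
      (𝓝[>] 0) (𝓝 0) := by
    have hcont : ContinuousAt
        (fun u : ℝ => |Real.log (a * (b + u) / (b * (a + u)))| + u * (a / (a - 1))) 0 := by
      fun_prop (disch := (try simp only); positivity)
    have h0 : |Real.log (a * (b + 0) / (b * (a + 0)))| + 0 * (a / (a - 1)) = 0 := by
      rw [add_zero, add_zero, mul_comm b a, div_self (by positivity), Real.log_one]
      simp
    have := hcont.tendsto
    rw [h0] at this
    exact this.mono_left nhdsWithin_le_nhds
  have hI : Tendsto I (𝓝[>] 0) (𝓝 0) := by
    refine squeeze_zero_norm' ?_ hbound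
    filter_upwards [self_mem_nhdsWithin] with u hu
    have := abs_integral_log_div_paretoBayesDensity_sub_le ha hb hu
    have := abs_sub_abs_le_abs_sub (I u) (log (a * (b + u) / (b * (a + u))))
    rw [Real.norm_eq_abs]
    linarith
  refine ((continuous_coe_real_ereal.tendsto 0).comp hI).congr' ?_
  filter_upwards [self_mem_nhdsWithin] with u hu
  exact (klDiv'_paretoBayes ha hb hu).symm

end ParetoBayesKL

theorem rao_blackwell_stmt15_general
    (n : ℕ) (α₀ α₁ : ℝ) (hα₀ : 0 < α₀) (h1 : 1 < (n : ℝ) * α₁) :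
    (∀ u : ℝ, 0 < u →
      ∫ x, x ∂(paretoBayes ((n : ℝ) * α₁) u) = (n : ℝ) * α₁ / ((n : ℝ) * α₁ - 1)) ∧
    (∀ u : ℝ, 0 < u →
      klDiv' (paretoBayes ((n : ℝ) * α₁) u) (paretoBayes ((n : ℝ) * α₀) u) ≤
        ((Real.log (((n : ℝ) * α₁ * ((n : ℝ) * α₀ + u)) / ((n : ℝ) * α₀ * ((n : ℝ) * α₁ + u)))
          + u * ((n : ℝ) * α₁) / ((n : ℝ) * α₁ - 1) : ℝ) : EReal)) ∧
    Tendsto (fun u : ℝ => klDiv' (paretoBayes ((n : ℝ) * α₁) u) (paretoBayes ((n : ℝ) * α₀) u))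
      (nhdsWithin 0 (Set.Ioi 0)) (nhds (0 : EReal)) := by
  have hn : (0 : ℝ) < n := Nat.cast_pos.2 (Nat.pos_of_ne_zero fun h => by simp [h] at h1; linarith)
  have hb : 0 < (n : ℝ) * α₀ := mul_pos hn hα₀
  refine ⟨fun u hu => integral_id_paretoBayes h1 hu, fun u hu => ?_,
    tendsto_klDiv'_paretoBayes h1 hb⟩
  have := (abs_le.1 (abs_integral_log_div_paretoBayesDensity_sub_le h1 hb hu)).2
  rw [← mul_div_assoc] at this
  rw [klDiv'_paretoBayes h1 hb hu, EReal.coe_le_coe_iff]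
  linarith

/-- Pareto example: for `n α₁ > 1` and the Gamma(u,u) prior on the scale, the Bayes marginal
`P_{W_u, nα₁}` has mean `nα₁/(nα₁ − 1)` (independently of `u`); moreover
`D_KL(P_{W_u, nα₁} ∥ P_{W_u, nα₀}) ≤ log(nα₁(nα₀+u)/(nα₀(nα₁+u))) + u·nα₁/(nα₁−1)`,
and consequently the divergence tends to `0` as `u ↓ 0`. -/
theorem rao_blackwell_stmt15
    (n : ℕ) (α₀ α₁ : ℝ) (hα₀ : 0 < α₀) (hα₁ : 0 < α₁) (h1 : 1 < (n : ℝ) * α₁) :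
    (∀ u : ℝ, 0 < u →
      ∫ x, x ∂(paretoBayes ((n : ℝ) * α₁) u) = (n : ℝ) * α₁ / ((n : ℝ) * α₁ - 1)) ∧
    (∀ u : ℝ, 0 < u →
      klDiv' (paretoBayes ((n : ℝ) * α₁) u) (paretoBayes ((n : ℝ) * α₀) u) ≤
        ((Real.log (((n : ℝ) * α₁ * ((n : ℝ) * α₀ + u)) / ((n : ℝ) * α₀ * ((n : ℝ) * α₁ + u)))
          + u * ((n : ℝ) * α₁) / ((n : ℝ) * α₁ - 1) : ℝ) : EReal)) ∧
    Tendsto (fun u : ℝ => klDiv' (paretoBayes ((n : ℝ) * α₁) u) (paretoBayes ((n : ℝ) * α₀) u))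
      (nhdsWithin 0 (Set.Ioi 0)) (nhds (0 : EReal)) :=
  rao_blackwell_stmt15_general n α₀ α₁ hα₀ h1
end
end

section
/- Let X₁,…,Xₙ be real-valued random variables whose joint distribution under every P_θ, θ ∈ Θ, is exchangeable, and let E = E(X₁,…,Xₙ) be an e-variable for Θ₀. Then G := (1/n!) ∑_π E(X_{π(1)},…,X_{π(n)}) (average over all permutations π of {1,…,n}) is an e-variable for Θ₀, and for every concave utility f and θ ∈ Θ, E_θ[f(G)] ≥ E_θ[f(E)] whenever both expectations are defined. -/
open MeasureTheory ENNReal Filter Set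
open scoped Classical
noncomputable section

/-- The expectation of an extended-real random variable is (well-)defined when at least one of
the expectations of its positive and negative parts is finite. -/
def ExpDefined {Ω : Type*} {mΩ : MeasurableSpace Ω} (μ : Measure Ω) (f : Ω → EReal) : Prop :=
  (∫⁻ ω, erealPos (f ω) ∂μ) < ⊤ ∨ (∫⁻ ω, erealPos (-(f ω)) ∂μ) < ⊤

/-- Ratio on `[0,∞]` with the conventions `0/0 = 0` and `∞/∞ = 1`. -/
def eratio (a b : ℝ≥0∞) : ℝ≥0∞ := if a = ⊤ ∧ b = ⊤ then 1 else a / b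

/-- `g` is a version of the conditional expectation of the nonnegative `h` given the
sub-σ-field `m`, under the measure `μ`. -/
def IsCondExpNN {Ω : Type*} {mΩ : MeasurableSpace Ω} (m : MeasurableSpace Ω)
    (μ : @Measure Ω mΩ) (h g : Ω → ℝ≥0∞) : Prop :=
  Measurable[m] g ∧ ∀ A : Set Ω, MeasurableSet[m] A → ∫⁻ ω in A, g ω ∂μ = ∫⁻ ω in A, h ω ∂μ

/-- `g` is a universal (θ-free) version of the conditional expectation of `h` given `m`,
simultaneously under all measures `P θ`, `θ` ranging over a set `T` of parameters. -/
def IsUnivCondExpNN {Ω Θ : Type*} {mΩ : MeasurableSpace Ω} (m : MeasurableSpace Ω)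
    (P : Θ → @Measure Ω mΩ) (T : Set Θ) (h g : Ω → ℝ≥0∞) : Prop :=
  Measurable[m] g ∧ ∀ θ ∈ T, IsCondExpNN m (P θ) h g

/-- A sub-σ-field `m` is sufficient for the family `P` over the parameter set `T`:
every nonnegative measurable function admits a universal conditional expectation given `m`. -/
def IsSufficient {Ω Θ : Type*} {mΩ : MeasurableSpace Ω} (m : MeasurableSpace Ω)
    (P : Θ → @Measure Ω mΩ) (T : Set Θ) : Prop :=
  m ≤ mΩ ∧ ∀ h : Ω → ℝ≥0∞, Measurable[mΩ] h → ∃ g, IsUnivCondExpNN m P T h g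

/-- `F : [0,∞] → [-∞,∞]` is the extension by limits of a concave utility `f : (0,∞) → ℝ`,
i.e. `F 0 = lim_{x↓0} f x`, `F ∞ = lim_{x→∞} f x`, and `F = f` in between. -/
def IsConcaveExtension (f : ℝ → ℝ) (F : ℝ≥0∞ → EReal) : Prop :=
  ConcaveOn ℝ (Set.Ioi 0) f ∧
  (∀ x : ℝ≥0∞, x ≠ 0 → x ≠ ⊤ → F x = ((f x.toReal : ℝ) : EReal)) ∧
  Tendsto (fun x : ℝ => ((f x : ℝ) : EReal)) (nhdsWithin 0 (Set.Ioi 0)) (nhds (F 0)) ∧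
  Tendsto (fun x : ℝ => ((f x : ℝ) : EReal)) atTop (nhds (F ⊤))

/-!
Each permuted copy `E (X ∘ π)` has the law of `E X` by exchangeability, so their average `G` has
the expectation of `E X`; this is the e-variable property. For a concave utility, Jensen's
inequality at each sample point bounds the average of the utilities of the copies by the utility
of `G`; integrating, and using again that every copy has the law of `E X`, compares
`E_θ[F (E X)]` with `E_θ[F G]`. The comparison is made on positive and negative parts separately,
in `[0, ∞]`, so that no `∞ - ∞` occurs. At the ends of `[0, ∞]` the utility is only a limit: at `0`
all points are shifted by `ε > 0` and `ε → 0`, and at `∞` a concave function with a finite limit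
is nondecreasing, hence below its limit.
-/

open Topology ProbabilityTheory

theorem erealPos_eq_toENNReal : erealPos = EReal.toENNReal := rfl

theorem EReal.coe_ennreal_sub_le_sub {a b c d : ℝ≥0∞} (hcd : c ≠ ⊤ ∨ d ≠ ⊤)
    (h : a + d ≤ c + b) : (a : EReal) - b ≤ c - d := by
  rcases eq_or_ne d ⊤ with rfl | hd
  · have hb : b = ⊤ := by simpa [hcd.resolve_right (not_not.2 rfl)] using h
    simp [hb]
  rw [EReal.le_sub_iff_add_le (.inl (EReal.coe_ennreal_ne_bot d)) (.inl (by simpa using hd)),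
    sub_eq_add_neg, add_right_comm, ← sub_eq_add_neg]
  exact EReal.sub_le_of_le_add (by exact_mod_cast h)

theorem ConcaveOn.le_of_tendsto_atTop {s : Set ℝ} {f : ℝ → ℝ} {x L : ℝ} (hf : ConcaveOn ℝ s f)
    (hs : Ici x ⊆ s) (hL : Tendsto f atTop (𝓝 L)) : f x ≤ L := by
  have hmono : ∀ y, x < y → f x ≤ f y := by
    intro y hxy
    have hslope : Tendsto (fun z => (f z - f y) / (z - y)) atTop (𝓝 0) :=
      (hL.sub_const (f y)).div_atTop (tendsto_atTop_add_const_right _ (-y) tendsto_id)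
    have : 0 ≤ (f y - f x) / (y - x) :=
      le_of_tendsto hslope ((eventually_gt_atTop y).mono fun z hyz =>
        hf.slope_anti_adjacent (hs self_mem_Ici) (hs (hxy.trans hyz).le) hxy hyz)
    linarith [(le_div_iff₀ (sub_pos.2 hxy)).1 this]
  exact ge_of_tendsto hL ((eventually_gt_atTop x).mono hmono)

theorem ConcaveOn.sum_le_card_mul_map_avg {ι : Type*} [Fintype ι] [Nonempty ι] {s : Set ℝ}
    {f : ℝ → ℝ} (hf : ConcaveOn ℝ s f) {p : ι → ℝ} (hp : ∀ i, p i ∈ s) :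
    ∑ i, f (p i) ≤ Fintype.card ι * f ((Fintype.card ι : ℝ)⁻¹ * ∑ i, p i) := by
  have hN : (Fintype.card ι : ℝ) ≠ 0 := Nat.cast_ne_zero.2 Fintype.card_ne_zero
  have h := hf.le_map_sum (t := Finset.univ) (w := fun _ => (Fintype.card ι : ℝ)⁻¹)
    (fun _ _ => by positivity) (by simp [Finset.card_univ, hN]) (fun i _ => hp i)
  simp only [smul_eq_mul, ← Finset.mul_sum] at h
  rwa [← inv_mul_le_iff₀ (by positivity)]

theorem sum_ofReal_add_le_of_sum_le {ι : Type*} [Fintype ι] {r : ι → ℝ} {s : ℝ} {N : ℕ}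
    (h : ∑ i, r i ≤ N * s) :
    ∑ i, ENNReal.ofReal (r i) + N * ENNReal.ofReal (-s) ≤
      N * ENNReal.ofReal s + ∑ i, ENNReal.ofReal (-r i) := by
  have hr : ∑ i, max (r i) 0 - ∑ i, max (-r i) 0 = ∑ i, r i := by
    simp only [← Finset.sum_sub_distrib, max_zero_sub_max_neg_zero_eq_self]
  have hs : N * max s 0 - N * max (-s) 0 = N * s := by
    rw [← mul_sub, max_zero_sub_max_neg_zero_eq_self]
  simp only [ENNReal.ofReal, ← ENNReal.coe_natCast, ← ENNReal.coe_mul, ← ENNReal.ofNNReal_finsetSum,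
    ← ENNReal.coe_add, ENNReal.coe_le_coe, ← NNReal.coe_le_coe]
  push_cast [Real.coe_toNNReal']
  linarith

namespace IsConcaveExtension

variable {f : ℝ → ℝ} {F : ℝ≥0∞ → EReal}

theorem continuousOn (hF : IsConcaveExtension f F) : ContinuousOn f (Ioi 0) :=
  hF.1.continuousOn isOpen_Ioi

theorem measurable (hF : IsConcaveExtension f F) : Measurable F := by
  have hfm : Measurable ((Ioi (0 : ℝ)).piecewise f 0) :=
    hF.continuousOn.measurable_piecewise continuousOn_const measurableSet_Ioi
  have hF_eq : F = fun x => if x = 0 then F 0 else if x = ⊤ then F ⊤ else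
      (((Ioi (0 : ℝ)).piecewise f 0 x.toReal : ℝ) : EReal) := by
    funext x
    split_ifs with h0 htop
    · rw [h0]
    · rw [htop]
    · rw [hF.2.1 x h0 htop, Set.piecewise_eq_of_mem (Ioi 0) f 0 (ENNReal.toReal_pos h0 htop)]
  rw [hF_eq]
  exact Measurable.ite (measurableSet_singleton 0) measurable_const <|
    Measurable.ite (measurableSet_singleton ⊤) measurable_const <|
      measurable_coe_real_ereal.comp (hfm.comp ENNReal.measurable_toReal)

theorem apply_le_apply_top (hF : IsConcaveExtension f F) (hbot : F ⊤ ≠ ⊥) (x : ℝ≥0∞) : F x ≤ F ⊤ := by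
  rcases eq_or_ne (F ⊤) ⊤ with htop | htop
  · exact htop ▸ le_top
  obtain ⟨L, hL⟩ : ∃ L : ℝ, F ⊤ = L := ⟨_, (EReal.coe_toReal htop hbot).symm⟩
  have hfL : ∀ y ∈ Ioi (0 : ℝ), f y ≤ L := fun y hy =>
    hF.1.le_of_tendsto_atTop (Ici_subset_Ioi.2 hy) (EReal.tendsto_coe.1 (hL ▸ hF.2.2.2))
  rw [hL]
  rcases eq_or_ne x 0 with rfl | h0
  · exact le_of_tendsto hF.2.2.1 (eventually_nhdsWithin_of_forall fun y hy =>
      EReal.coe_le_coe_iff.2 (hfL y hy))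
  rcases eq_or_ne x ⊤ with rfl | htop
  · exact hL.le
  rw [hF.2.1 x h0 htop]
  exact EReal.coe_le_coe_iff.2 (hfL _ (ENNReal.toReal_pos h0 htop))

theorem tendsto_nhdsGT (hF : IsConcaveExtension f F) {x : ℝ≥0∞} (hx : x ≠ ⊤) :
    Tendsto (fun ε => (f (x.toReal + ε) : EReal)) (𝓝[>] 0) (𝓝 (F x)) := by
  rcases eq_or_ne x 0 with rfl | h0
  · simpa using hF.2.2.1
  have hpos : 0 < x.toReal := ENNReal.toReal_pos h0 hx
  have hshift : Tendsto (fun ε : ℝ => x.toReal + ε) (𝓝[>] 0) (𝓝 x.toReal) := by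
    simpa using (tendsto_const_nhds.add tendsto_id : Tendsto (fun ε : ℝ => x.toReal + ε) (𝓝 0) _)
      |>.mono_left nhdsWithin_le_nhds
  rw [hF.2.1 x h0 hx]
  exact continuous_coe_real_ereal.continuousAt.tendsto.comp
    ((hF.continuousOn.continuousAt (Ioi_mem_nhds hpos)).tendsto.comp hshift)

variable {ι : Type*} [Fintype ι] [Nonempty ι]

theorem sum_toENNReal_add_le_of_ne_top (hF : IsConcaveExtension f F) {a : ι → ℝ≥0∞}
    (ha : ∀ i, a i ≠ ⊤) :
    ∑ i, (F (a i)).toENNReal +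
        Fintype.card ι * (-F ((Fintype.card ι : ℝ≥0∞)⁻¹ * ∑ i, a i)).toENNReal ≤
      Fintype.card ι * (F ((Fintype.card ι : ℝ≥0∞)⁻¹ * ∑ i, a i)).toENNReal +
        ∑ i, (-F (a i)).toENNReal := by
  set N := Fintype.card ι
  set c := (N : ℝ≥0∞)⁻¹ * ∑ i, a i
  have hc : c ≠ ⊤ :=
    ENNReal.mul_ne_top (by simp [N, Fintype.card_ne_zero]) (ENNReal.sum_ne_top.2 fun i _ => ha i)
  have hc_toReal : c.toReal = (N : ℝ)⁻¹ * ∑ i, (a i).toReal := by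
    rw [ENNReal.toReal_mul, ENNReal.toReal_inv, ENNReal.toReal_natCast,
      ENNReal.toReal_sum fun i _ => ha i]
  have hjensen : ∀ ε > 0, ∑ i, f ((a i).toReal + ε) ≤ N * f (c.toReal + ε) := fun ε hε => by
    have := hF.1.sum_le_card_mul_map_avg (p := fun i => (a i).toReal + ε)
      fun i => (show 0 < (a i).toReal + ε by positivity)
    convert this using 4
    rw [hc_toReal, Finset.sum_add_distrib, Finset.sum_const, Finset.card_univ, nsmul_eq_mul,
      mul_add, inv_mul_cancel_left₀ (Nat.cast_ne_zero.2 Fintype.card_ne_zero)]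
  have hpos : ∀ {x}, x ≠ ⊤ → Tendsto (fun ε => ((f (x.toReal + ε) : EReal)).toENNReal)
      (𝓝[>] 0) (𝓝 (F x).toENNReal) :=
    fun hx => (EReal.continuous_toENNReal.tendsto _).comp (hF.tendsto_nhdsGT hx)
  have hneg : ∀ {x}, x ≠ ⊤ → Tendsto (fun ε => (-(f (x.toReal + ε) : EReal)).toENNReal)
      (𝓝[>] 0) (𝓝 (-F x).toENNReal) :=
    fun hx => ((EReal.continuous_toENNReal.comp continuous_neg).tendsto _).comp
      (hF.tendsto_nhdsGT hx)
  refine le_of_tendsto_of_tendsto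
    ((tendsto_finsetSum _ fun i _ => hpos (ha i)).add
      (ENNReal.Tendsto.const_mul (hneg hc) (.inr (natCast_ne_top N))))
    ((ENNReal.Tendsto.const_mul (hpos hc) (.inr (natCast_ne_top N))).add
      (tendsto_finsetSum _ fun i _ => hneg (ha i)))
    (eventually_nhdsWithin_of_forall fun ε hε => ?_)
  simpa [← EReal.coe_neg] using sum_ofReal_add_le_of_sum_le (hjensen ε hε)

theorem sum_toENNReal_add_le (hF : IsConcaveExtension f F) (a : ι → ℝ≥0∞) :
    ∑ i, (F (a i)).toENNReal +
        Fintype.card ι * (-F ((Fintype.card ι : ℝ≥0∞)⁻¹ * ∑ i, a i)).toENNReal ≤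
      Fintype.card ι * (F ((Fintype.card ι : ℝ≥0∞)⁻¹ * ∑ i, a i)).toENNReal +
        ∑ i, (-F (a i)).toENNReal := by
  by_cases hfin : ∀ i, a i ≠ ⊤
  · exact hF.sum_toENNReal_add_le_of_ne_top hfin
  obtain ⟨i₀, hi₀⟩ := not_forall_not.1 hfin
  have hc : (Fintype.card ι : ℝ≥0∞)⁻¹ * ∑ i, a i = ⊤ := by
    rw [ENNReal.sum_eq_top.2 ⟨i₀, Finset.mem_univ _, hi₀⟩]
    exact ENNReal.mul_top (by simp)
  rw [hc]
  rcases eq_or_ne (F ⊤) ⊥ with hbot | hbot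
  · have : ∑ i, (-F (a i)).toENNReal = ⊤ :=
      ENNReal.sum_eq_top.2 ⟨i₀, Finset.mem_univ _, by simp [hi₀, hbot]⟩
    simp [this]
  have := Finset.sum_le_sum fun i (_ : i ∈ Finset.univ) =>
    add_le_add (EReal.toENNReal_le_toENNReal (hF.apply_le_apply_top hbot (a i)))
      (EReal.toENNReal_le_toENNReal (EReal.neg_le_neg_iff.2 (hF.apply_le_apply_top hbot (a i))))
  simpa [Finset.sum_add_distrib] using this

end IsConcaveExtension

section Exchangeable

variable {Ω α ι : Type*} {mΩ : MeasurableSpace Ω} [MeasurableSpace α] [Fintype ι]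
  {μ : Measure Ω} {X : Ω → α} {Y : ι → Ω → α} {φ : α → ℝ≥0∞}

theorem lintegral_sum_comp_eq_card_mul (hY : ∀ i, IdentDistrib (Y i) X μ μ)
    (hφ : Measurable φ) :
    ∫⁻ ω, ∑ i, φ (Y i ω) ∂μ = Fintype.card ι * ∫⁻ ω, φ (X ω) ∂μ := by
  have hcopy : ∀ i, ∫⁻ ω, φ (Y i ω) ∂μ = ∫⁻ ω, φ (X ω) ∂μ := fun i =>
    ((hY i).comp hφ).lintegral_eq
  rw [lintegral_finsetSum' (f := fun i ω => φ (Y i ω)) _ fun i _ =>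
    hφ.comp_aemeasurable (hY i).aemeasurable_fst]
  simp [hcopy]

variable [Nonempty ι]

theorem lintegral_avg_comp_eq (hY : ∀ i, IdentDistrib (Y i) X μ μ) (hφ : Measurable φ) :
    ∫⁻ ω, (Fintype.card ι : ℝ≥0∞)⁻¹ * ∑ i, φ (Y i ω) ∂μ = ∫⁻ ω, φ (X ω) ∂μ := by
  rw [lintegral_const_mul' _ _ (by simp), lintegral_sum_comp_eq_card_mul hY hφ, ← mul_assoc,
    ENNReal.inv_mul_cancel (by simp) (by simp), one_mul]

theorem IsConcaveExtension.eexp_comp_le_eexp_avg {f : ℝ → ℝ} {F : ℝ≥0∞ → EReal}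
    (hF : IsConcaveExtension f F) (hY : ∀ i, IdentDistrib (Y i) X μ μ) (hφ : Measurable φ)
    (hdef : ExpDefined μ fun ω => F ((Fintype.card ι : ℝ≥0∞)⁻¹ * ∑ i, φ (Y i ω))) :
    eexp μ (fun ω => F (φ (X ω))) ≤
      eexp μ fun ω => F ((Fintype.card ι : ℝ≥0∞)⁻¹ * ∑ i, φ (Y i ω)) := by
  set N := Fintype.card ι
  set G := fun ω => (N : ℝ≥0∞)⁻¹ * ∑ i, φ (Y i ω)
  have hNtop : (N : ℝ≥0∞) ≠ ⊤ := natCast_ne_top N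
  have hFφY : ∀ i, AEMeasurable (fun ω => F (φ (Y i ω))) μ := fun i =>
    (hF.measurable.comp hφ).comp_aemeasurable (hY i).aemeasurable_fst
  have hFG : AEMeasurable (fun ω => F (G ω)) μ := hF.measurable.comp_aemeasurable <|
    aemeasurable_const.mul <| Finset.aemeasurable_fun_sum _ fun i _ =>
      hφ.comp_aemeasurable (hY i).aemeasurable_fst
  simp only [eexp, erealPos_eq_toENNReal] at hdef ⊢
  refine EReal.coe_ennreal_sub_le_sub (hdef.imp LT.lt.ne LT.lt.ne)
    ((ENNReal.mul_le_mul_iff_right (by simp [N]) hNtop).1 ?_)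
  calc (N : ℝ≥0∞) * (∫⁻ ω, (F (φ (X ω))).toENNReal ∂μ + ∫⁻ ω, (-F (G ω)).toENNReal ∂μ)
      = ∫⁻ ω, (∑ i, (F (φ (Y i ω))).toENNReal + N * (-F (G ω)).toENNReal) ∂μ := by
        rw [lintegral_add_left' (Finset.aemeasurable_fun_sum _ fun i _ =>
            (hFφY i).ereal_toENNReal), lintegral_const_mul' _ _ hNtop,
          lintegral_sum_comp_eq_card_mul (φ := fun x => (F (φ x)).toENNReal) hY
            (hF.measurable.comp hφ).ereal_toENNReal, mul_add]
    _ ≤ ∫⁻ ω, (N * (F (G ω)).toENNReal + ∑ i, (-F (φ (Y i ω))).toENNReal) ∂μ :=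
        lintegral_mono fun ω => hF.sum_toENNReal_add_le _
    _ = N * (∫⁻ ω, (F (G ω)).toENNReal ∂μ + ∫⁻ ω, (-F (φ (X ω))).toENNReal ∂μ) := by
        rw [lintegral_add_left' (hFG.ereal_toENNReal.const_mul _), lintegral_const_mul' _ _ hNtop,
          lintegral_sum_comp_eq_card_mul (φ := fun x => (-F (φ x)).toENNReal) hY
            (hF.measurable.comp hφ).neg.ereal_toENNReal, mul_add]

end Exchangeable

theorem rao_blackwell_stmt17_general
    {Ω Θ : Type*} {mΩ : MeasurableSpace Ω} (P : Θ → Measure Ω)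
    (Θ₀ : Set Θ)
    (n : ℕ) (X : Ω → (Fin n → ℝ)) (hX : Measurable[mΩ] X)
    -- exchangeability under every `P θ`
    (hexch : ∀ θ : Θ, ∀ π : Equiv.Perm (Fin n),
      Measure.map (fun ω => fun i => X ω (π i)) (P θ) = Measure.map X (P θ))
    (E : (Fin n → ℝ) → ℝ≥0∞) (hE : Measurable E)
    (hEval : ∀ θ ∈ Θ₀, ∫⁻ ω, E (X ω) ∂(P θ) ≤ 1)
    (G : Ω → ℝ≥0∞)
    (hG : ∀ ω, G ω = (n.factorial : ℝ≥0∞)⁻¹ *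
      ∑ π : Equiv.Perm (Fin n), E (fun i => X ω (π i)))
    (f : ℝ → ℝ) (F : ℝ≥0∞ → EReal) (hF : IsConcaveExtension f F) :
    (∀ θ ∈ Θ₀, ∫⁻ ω, G ω ∂(P θ) ≤ 1) ∧
    (∀ θ : Θ,
      ExpDefined (P θ) (fun ω => F (E (X ω))) → ExpDefined (P θ) (fun ω => F (G ω)) →
        eexp (P θ) (fun ω => F (E (X ω))) ≤ eexp (P θ) (fun ω => F (G ω))) := by
  have hXπ : ∀ θ (π : Equiv.Perm (Fin n)),
      IdentDistrib (fun ω i => X ω (π i)) X (P θ) (P θ) := fun θ π =>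
    ⟨(measurable_pi_lambda _ fun i => (measurable_pi_apply (π i)).comp hX).aemeasurable,
      hX.aemeasurable, hexch θ π⟩
  obtain rfl : G = fun ω => (Fintype.card (Equiv.Perm (Fin n)) : ℝ≥0∞)⁻¹ *
      ∑ π : Equiv.Perm (Fin n), E (fun i => X ω (π i)) := by
    funext ω
    rw [hG, Fintype.card_perm, Fintype.card_fin]
  exact ⟨fun θ hθ => (lintegral_avg_comp_eq (hXπ θ) hE).trans_le (hEval θ hθ),
    fun θ _ hdef => hF.eexp_comp_le_eexp_avg (hXπ θ) hE hdef⟩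

/-- Permutation (Rao–Blackwellization over the order statistics): if the data
`X : Ω → (Fin n → ℝ)` are exchangeable under every `P θ` and `E ∘ X` is an e-variable for
`Θ₀`, then `G := (1/n!) ∑_π E(X ∘ π)` is an e-variable for `Θ₀`, and for every concave
utility `F` and every `θ ∈ Θ`, `E_θ[F(G)] ≥ E_θ[F(E(X))]` whenever both expectations are
defined. -/
theorem rao_blackwell_stmt17
    {Ω Θ : Type*} {mΩ : MeasurableSpace Ω} (P : Θ → Measure Ω)
    [∀ θ, IsProbabilityMeasure (P θ)]
    (Θ₀ Θ₁ : Set Θ) (hΘ : Θ₀ ∪ Θ₁ = Set.univ)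
    (n : ℕ) (X : Ω → (Fin n → ℝ)) (hX : Measurable[mΩ] X)
    -- exchangeability under every `P θ`
    (hexch : ∀ θ : Θ, ∀ π : Equiv.Perm (Fin n),
      Measure.map (fun ω => fun i => X ω (π i)) (P θ) = Measure.map X (P θ))
    (E : (Fin n → ℝ) → ℝ≥0∞) (hE : Measurable E)
    (hEval : ∀ θ ∈ Θ₀, ∫⁻ ω, E (X ω) ∂(P θ) ≤ 1)
    (G : Ω → ℝ≥0∞)
    (hG : ∀ ω, G ω = (n.factorial : ℝ≥0∞)⁻¹ *
      ∑ π : Equiv.Perm (Fin n), E (fun i => X ω (π i)))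
    (f : ℝ → ℝ) (F : ℝ≥0∞ → EReal) (hF : IsConcaveExtension f F) :
    (∀ θ ∈ Θ₀, ∫⁻ ω, G ω ∂(P θ) ≤ 1) ∧
    (∀ θ : Θ,
      ExpDefined (P θ) (fun ω => F (E (X ω))) → ExpDefined (P θ) (fun ω => F (G ω)) →
        eexp (P θ) (fun ω => F (E (X ω))) ≤ eexp (P θ) (fun ω => F (G ω))) :=
  rao_blackwell_stmt17_general P Θ₀ n X hX hexch E hE hEval G hG f F hF
end
end
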